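/- (Theorem 2) For IM-OCP with nonincreasing step sizes η_t and independent Bernoulli feedback indicators, if D is a constant such that B_R(u, r_t) ≤ D almost surely for all 1 ≤ t ≤ T, where u is any minimizer of Σ_{t=1}^T ℓ_{1−α}(·, r*_t), then the expected regret satisfies E[ Σ_{t=1}^T ℓ_{1−α}(r_t, r*_t)·obs_t/p_t ] − min_{v ∈ ℝ} Σ_{t=1}^T ℓ_{1−α}(v, r*_t) ≤ D/η_T + (1/(2·μ·p_min)) · Σ_{t=1}^T η_t, where p_min = min_{1 ≤ t ≤ T} p_t. -/

import Mathlib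

/-!
Pathwise, the subgradient inequality of the pinball loss bounds the weighted loss
`ℓ(r_t, r*_t) obs_t / p_t` by `ℓ(u, r*_t) obs_t / p_t + g_t (r_t - u)`, where
`g_t = (α - E_t) obs_t / p_t` is the direction of the update. The mirror-descent step
`R'(r_{t+1}) = R'(r_t) - η_t g_t` and strong convexity give
`g_t (r_t - u) ≤ (B_R(u, r_t) - B_R(u, r_{t+1})) / η_t + η_t g_t² / (2μ)`, which telescopes for
nonincreasing `η_t` to `D / η_T + ∑ η_t g_t² / (2μ)`. Finally `g_t² ≤ obs_t / p_t²` and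
`E[obs_t] = p_t`, so taking expectations leaves `∑ ℓ(u, r*_t) + ∑ η_t / (2μ p_t)`.
-/

open MeasureTheory ProbabilityTheory

/-- The quantile (pinball) loss `ℓ_{1-α}(r, s) = (α - 1{r < s})(r - s)`. -/
noncomputable def pinball (α r s : ℝ) : ℝ := (α - if r < s then 1 else 0) * (r - s)

open Finset

noncomputable def pinballSlope (α r s : ℝ) : ℝ := α - if r < s then 1 else 0

noncomputable def bregman (R R' : ℝ → ℝ) (u v : ℝ) : ℝ := R u - R v - R' v * (u - v)

section Pinball

variable {α : ℝ}

lemma pinball_nonneg (hα : α ∈ Set.Icc (0 : ℝ) 1) (r s : ℝ) : 0 ≤ pinball α r s := by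
  unfold pinball
  split_ifs with h <;> nlinarith [hα.1, hα.2]

lemma sq_pinballSlope_le_one (hα : α ∈ Set.Icc (0 : ℝ) 1) (r s : ℝ) :
    pinballSlope α r s ^ 2 ≤ 1 := by
  unfold pinballSlope
  split_ifs with h <;> nlinarith [hα.1, hα.2]

lemma pinball_sub_pinball_le (α a u s : ℝ) :
    pinball α a s - pinball α u s ≤ pinballSlope α a s * (a - u) := by
  unfold pinball pinballSlope
  split_ifs with ha hu hu <;> nlinarith

end Pinball

section Bregman

variable {R R' : ℝ → ℝ} {μ : ℝ}

lemma le_of_hasDerivAt_of_mul_sub_nonneg {f f' : ℝ → ℝ} {y : ℝ}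
    (hf : ∀ s, HasDerivAt f (f' s) s) (hf' : ∀ s, 0 ≤ f' s * (s - y)) (x : ℝ) :
    f y ≤ f x := by
  have hdiff : Differentiable ℝ f := fun s => (hf s).differentiableAt
  rcases le_total y x with hyx | hxy
  · refine monotoneOn_of_deriv_nonneg (convex_Icc y x) hdiff.continuous.continuousOn
      hdiff.differentiableOn (fun s hs => ?_) (Set.left_mem_Icc.2 hyx)
      (Set.right_mem_Icc.2 hyx) hyx
    rw [interior_Icc] at hs
    rw [(hf s).deriv]
    exact nonneg_of_mul_nonneg_left (hf' s) (sub_pos.2 hs.1)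
  · refine antitoneOn_of_deriv_nonpos (convex_Icc x y) hdiff.continuous.continuousOn
      hdiff.differentiableOn (fun s hs => ?_) (Set.left_mem_Icc.2 hxy)
      (Set.right_mem_Icc.2 hxy) hxy
    rw [interior_Icc] at hs
    rw [(hf s).deriv]
    exact nonpos_of_mul_nonneg_left (hf' s) (sub_neg.2 hs.2)

/-- `s ↦ R s - R' y (s - y) - μ/2 (s - y)²` has derivative of the sign of `s - y`. -/
lemma mul_sq_le_bregman (hR : ∀ x, HasDerivAt R (R' x) x)
    (hsc : ∀ x y, (R' x - R' y) * (x - y) ≥ μ * (x - y) ^ 2) (x y : ℝ) :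
    μ / 2 * (x - y) ^ 2 ≤ bregman R R' x y := by
  have hφ : ∀ s, HasDerivAt (fun s => R s - R' y * (s - y) - μ / 2 * (s - y) ^ 2)
      (R' s - R' y - μ * (s - y)) s := by
    intro s
    have hlin := ((hasDerivAt_id s).sub_const y).const_mul (R' y)
    have hsq := (((hasDerivAt_id s).sub_const y).pow 2).const_mul (μ / 2)
    exact (((hR s).sub hlin).sub hsq).congr_deriv (by simp only [id]; ring)
  have hmin := le_of_hasDerivAt_of_mul_sub_nonneg hφ
    (fun s => by nlinarith [hsc s y]) x
  simp only [sub_self, mul_zero, sub_zero, ne_eq, OfNat.ofNat_ne_zero, not_false_eq_true,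
    zero_pow] at hmin
  unfold bregman
  linarith

variable (hμ : 0 < μ) (hbl : ∀ x y, μ / 2 * (x - y) ^ 2 ≤ bregman R R' x y)
include hμ hbl

/-- Three-point identity `B(u,a) - B(u,b) = B(b,a) - c (u - b)` plus Young's inequality. -/
lemma mul_sub_le_bregman_sub_bregman {a b u c : ℝ} (h : R' b = R' a - c) :
    c * (a - u) ≤ bregman R R' u a - bregman R R' u b + c ^ 2 / (2 * μ) := by
  have hyoung : c * (a - b) - μ / 2 * (b - a) ^ 2 ≤ c ^ 2 / (2 * μ) := by
    rw [le_div_iff₀ (by positivity)]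
    nlinarith [sq_nonneg (μ * (b - a) + c)]
  have := hbl b a
  unfold bregman at this ⊢
  rw [h]
  linarith

end Bregman

section MirrorDescent

variable {η : ℕ → ℝ} (hη : ∀ t, 0 < η t) (hηdec : ∀ t, η (t + 1) ≤ η t)
include hη hηdec

lemma sum_sub_div_add_div_le {b : ℕ → ℝ} {D : ℝ} {T : ℕ} (hT : 1 ≤ T)
    (hb : ∀ t ∈ Icc 1 T, b t ≤ D) :
    ∑ t ∈ Icc 1 T, (b t - b (t + 1)) / η t + b (T + 1) / η T ≤ D / η T := by
  induction T, hT using Nat.le_induction with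
  | base =>
    have := div_le_div_of_nonneg_right (hb 1 (by simp)) (hη 1).le
    simp only [Icc_self, sum_singleton]
    linarith [sub_div (b 1) (b 2) (η 1)]
  | succ n hn ih =>
    have hrecip : 1 / η n ≤ 1 / η (n + 1) := one_div_le_one_div_of_le (hη _) (hηdec n)
    have hgrow : b (n + 1) / η (n + 1) - b (n + 1) / η n ≤ D / η (n + 1) - D / η n := by
      simp only [div_eq_mul_one_div (b _), div_eq_mul_one_div D, ← mul_sub]
      exact mul_le_mul_of_nonneg_right (hb (n + 1) (by simp)) (sub_nonneg.2 hrecip)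
    have := ih fun t ht => hb t (Icc_subset_Icc_right n.le_succ ht)
    rw [sum_Icc_succ_top (by omega)]
    linarith [sub_div (b (n + 1)) (b (n + 1 + 1)) (η (n + 1))]

variable {R R' : ℝ → ℝ} {μ : ℝ} (hμ : 0 < μ)
  (hbl : ∀ x y, μ / 2 * (x - y) ^ 2 ≤ bregman R R' x y)
include hμ hbl

lemma sum_mul_sub_le_of_mirror_step {r g : ℕ → ℝ} {u D : ℝ} {T : ℕ} (hT : 1 ≤ T)
    (hupd : ∀ t, 1 ≤ t → R' (r (t + 1)) = R' (r t) - η t * g t)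
    (hD : ∀ t ∈ Icc 1 T, bregman R R' u (r t) ≤ D) :
    ∑ t ∈ Icc 1 T, g t * (r t - u) ≤ D / η T + ∑ t ∈ Icc 1 T, η t * g t ^ 2 / (2 * μ) := by
  set b := fun t => bregman R R' u (r t)
  have hstep : ∀ t ∈ Icc 1 T,
      g t * (r t - u) ≤ (b t - b (t + 1)) / η t + η t * g t ^ 2 / (2 * μ) := by
    intro t ht
    have h := mul_sub_le_bregman_sub_bregman hμ hbl (u := u) (hupd t (mem_Icc.1 ht).1)
    calc g t * (r t - u) = η t * g t * (r t - u) / η t := by field_simp [(hη t).ne']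
      _ ≤ (b t - b (t + 1) + (η t * g t) ^ 2 / (2 * μ)) / η t :=
        div_le_div_of_nonneg_right h (hη t).le
      _ = (b t - b (t + 1)) / η t + η t * g t ^ 2 / (2 * μ) := by field_simp [(hη t).ne']
  have hlast : 0 ≤ b (T + 1) / η T :=
    div_nonneg ((by positivity : 0 ≤ μ / 2 * (u - r (T + 1)) ^ 2).trans (hbl _ _)) (hη T).le
  have htele := sum_sub_div_add_div_le hη hηdec hT hD
  calc ∑ t ∈ Icc 1 T, g t * (r t - u)
      ≤ ∑ t ∈ Icc 1 T, ((b t - b (t + 1)) / η t + η t * g t ^ 2 / (2 * μ)) := sum_le_sum hstep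
    _ ≤ D / η T + ∑ t ∈ Icc 1 T, η t * g t ^ 2 / (2 * μ) := by
      rw [sum_add_distrib]
      linarith

end MirrorDescent

/-- `g_t² ≤ obs_t / p_t²` bounds the second-order terms by a sum that is linear in `obs`. -/
lemma sum_pinball_mul_div_le {α μ D u : ℝ} {R R' : ℝ → ℝ} {s η p obs r : ℕ → ℝ} {T : ℕ}
    (hα : α ∈ Set.Icc (0 : ℝ) 1) (hμ : 0 < μ)
    (hbl : ∀ x y, μ / 2 * (x - y) ^ 2 ≤ bregman R R' x y)
    (hη : ∀ t, 0 < η t) (hηdec : ∀ t, η (t + 1) ≤ η t) (hp : ∀ t, 0 < p t)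
    (hobs : ∀ t, obs t = 0 ∨ obs t = 1) (hT : 1 ≤ T)
    (hupd : ∀ t, 1 ≤ t →
      R' (r (t + 1)) = R' (r t) - η t * (pinballSlope α (r t) (s t) * obs t / p t))
    (hD : ∀ t ∈ Icc 1 T, bregman R R' u (r t) ≤ D) :
    ∑ t ∈ Icc 1 T, pinball α (r t) (s t) * obs t / p t ≤
      D / η T + ∑ t ∈ Icc 1 T, (pinball α u (s t) / p t + η t / (2 * μ * p t ^ 2)) * obs t := by
  set g := fun t => pinballSlope α (r t) (s t) * obs t / p t
  have hloss : ∀ t ∈ Icc 1 T, pinball α (r t) (s t) * obs t / p t ≤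
      pinball α u (s t) * obs t / p t + g t * (r t - u) := by
    intro t _
    have hw : 0 ≤ obs t / p t := div_nonneg (by rcases hobs t with h | h <;> simp [h]) (hp t).le
    have := mul_le_mul_of_nonneg_right (pinball_sub_pinball_le α (r t) u (s t)) hw
    have hlhs : pinball α (r t) (s t) * obs t / p t - pinball α u (s t) * obs t / p t =
        (pinball α (r t) (s t) - pinball α u (s t)) * (obs t / p t) := by ring
    have hrhs : g t * (r t - u) = pinballSlope α (r t) (s t) * (r t - u) * (obs t / p t) := by
      simp only [g]; ring
    linarith
  have hsq : ∀ t ∈ Icc 1 T, η t * g t ^ 2 / (2 * μ) ≤ η t / (2 * μ * p t ^ 2) * obs t := by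
    intro t _
    have hslope := sq_pinballSlope_le_one hα (r t) (s t)
    have hc : 0 ≤ η t / (2 * μ * p t ^ 2) := by have := hη t; have := hp t; positivity
    simp only [g]
    rcases hobs t with h | h <;> rw [h]
    · simp
    · calc η t * (pinballSlope α (r t) (s t) * 1 / p t) ^ 2 / (2 * μ)
          = pinballSlope α (r t) (s t) ^ 2 * (η t / (2 * μ * p t ^ 2)) := by
            field_simp [(hp t).ne']
        _ ≤ η t / (2 * μ * p t ^ 2) * 1 := by nlinarith
  have hregret := sum_mul_sub_le_of_mirror_step hη hηdec hμ hbl hT hupd hD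
  calc ∑ t ∈ Icc 1 T, pinball α (r t) (s t) * obs t / p t
      ≤ ∑ t ∈ Icc 1 T, (pinball α u (s t) * obs t / p t + g t * (r t - u)) := sum_le_sum hloss
    _ ≤ ∑ t ∈ Icc 1 T, pinball α u (s t) * obs t / p t +
          (D / η T + ∑ t ∈ Icc 1 T, η t / (2 * μ * p t ^ 2) * obs t) := by
      rw [sum_add_distrib]
      linarith [sum_le_sum hsq]
    _ = D / η T + ∑ t ∈ Icc 1 T, (pinball α u (s t) / p t + η t / (2 * μ * p t ^ 2)) * obs t := by
      simp only [add_mul, sum_add_distrib, div_mul_eq_mul_div]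
      ring

section ZeroOne

variable {Ω : Type*} {f : Ω → ℝ}

lemma eq_indicator_of_zero_or_one (h01 : ∀ ω, f ω = 0 ∨ f ω = 1) :
    f = {ω | f ω = 1}.indicator 1 := by
  funext ω
  rcases h01 ω with h | h <;> simp [h]

variable [MeasurableSpace Ω] {P : Measure Ω}

lemma integrable_of_zero_or_one [IsFiniteMeasure P] (hf : Measurable f)
    (h01 : ∀ ω, f ω = 0 ∨ f ω = 1) : Integrable f P := by
  rw [eq_indicator_of_zero_or_one h01]
  exact (integrable_const 1).indicator (hf (measurableSet_singleton 1))

lemma integral_of_zero_or_one (hf : Measurable f) (h01 : ∀ ω, f ω = 0 ∨ f ω = 1) :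
    ∫ ω, f ω ∂P = P.real {ω | f ω = 1} := by
  conv_lhs => rw [eq_indicator_of_zero_or_one h01]
  exact integral_indicator_one (hf (measurableSet_singleton 1))

lemma integral_le_of_ae_le_add_sum_mul [IsProbabilityMeasure P] {ι : Type*} {s : Finset ι}
    {F : Ω → ℝ} {obs : ι → Ω → ℝ} {c q : ι → ℝ} {K : ℝ} (hF : 0 ≤ᵐ[P] F)
    (hmeas : ∀ i, Measurable (obs i)) (h01 : ∀ i ω, obs i ω = 0 ∨ obs i ω = 1)
    (hq : ∀ i, P.real {ω | obs i ω = 1} = q i)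
    (hle : ∀ᵐ ω ∂P, F ω ≤ K + ∑ i ∈ s, c i * obs i ω) :
    ∫ ω, F ω ∂P ≤ K + ∑ i ∈ s, c i * q i := by
  have hint : ∀ i, Integrable (fun ω => c i * obs i ω) P :=
    fun i => (integrable_of_zero_or_one (hmeas i) (h01 i)).const_mul (c i)
  calc ∫ ω, F ω ∂P ≤ ∫ ω, (K + ∑ i ∈ s, c i * obs i ω) ∂P :=
        integral_mono_of_nonneg hF
          ((integrable_const K).add (integrable_finsetSum s fun i _ => hint i)) hle
    _ = K + ∑ i ∈ s, c i * q i := by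
      rw [integral_add (integrable_const K) (integrable_finsetSum s fun i _ => hint i),
        integral_const, integral_finsetSum s fun i _ => hint i]
      simp only [probReal_univ, one_smul, integral_const_mul,
        integral_of_zero_or_one (hmeas _) (h01 _), hq]

end ZeroOne

lemma sum_div_le_sum_div_inf' {ι : Type*} {s : Finset ι} (hs : s.Nonempty) {a p : ι → ℝ}
    (ha : ∀ i ∈ s, 0 ≤ a i) (hp : ∀ i ∈ s, 0 < p i) :
    ∑ i ∈ s, a i / p i ≤ (∑ i ∈ s, a i) / s.inf' hs p := by
  rw [sum_div]
  exact sum_le_sum fun i hi =>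
    div_le_div_of_nonneg_left (ha i hi) ((lt_inf'_iff hs).2 hp) (inf'_le p hi)

theorem imocp_expected_regret_bound_general
    {Ω : Type*} [MeasurableSpace Ω] (Pr : Measure Ω) [IsProbabilityMeasure Pr]
    (α μ D : ℝ) (hα : α ∈ Set.Icc (0 : ℝ) 1) (hμ : 0 < μ)
    (rstar η p : ℕ → ℝ)
    (hη : ∀ t, 0 < η t)
    (hηdec : ∀ t, η (t + 1) ≤ η t)
    (hp : ∀ t, p t ∈ Set.Ioc (0 : ℝ) 1)
    (obs : ℕ → Ω → ℝ)
    (hobsmeas : ∀ t, Measurable (obs t))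
    (hobs01 : ∀ t ω, obs t ω = 0 ∨ obs t ω = 1)
    (hobsp : ∀ t, Pr {ω | obs t ω = 1} = ENNReal.ofReal (p t))
    (R R' : ℝ → ℝ)
    (hR : ∀ x, HasDerivAt R (R' x) x)
    (hsc : ∀ x y, (R' x - R' y) * (x - y) ≥ μ * (x - y) ^ 2)
    (r E : ℕ → Ω → ℝ)
    (hE : ∀ t ω, E t ω = if rstar t > r t ω then 1 else 0)
    (hupd : ∀ t, 1 ≤ t → ∀ ω,
      R' (r (t + 1) ω) = R' (r t ω) - η t * (α - E t ω) * obs t ω / p t)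
    (T : ℕ) (hT : 1 ≤ T)
    (u : ℝ)
    (hD : ∀ t ∈ Finset.Icc 1 T, ∀ᵐ ω ∂Pr,
      R u - R (r t ω) - R' (r t ω) * (u - r t ω) ≤ D) :
    (∫ ω, ∑ t ∈ Finset.Icc 1 T, pinball α (r t ω) (rstar t) * obs t ω / p t ∂Pr) -
        ∑ t ∈ Finset.Icc 1 T, pinball α u (rstar t) ≤
      D / η T +
        (1 / (2 * μ * ((Finset.Icc 1 T).inf' (Finset.nonempty_Icc.mpr hT) p))) *
          ∑ t ∈ Finset.Icc 1 T, η t := by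
  have hp0 : ∀ t, 0 < p t := fun t => (hp t).1
  set c := fun t => pinball α u (rstar t) / p t + η t / (2 * μ * p t ^ 2)
  have hpath : ∀ᵐ ω ∂Pr, ∑ t ∈ Icc 1 T, pinball α (r t ω) (rstar t) * obs t ω / p t ≤
      D / η T + ∑ t ∈ Icc 1 T, c t * obs t ω := by
    filter_upwards [(Filter.eventually_all_finset _).2 hD] with ω hω
    refine sum_pinball_mul_div_le hα hμ (mul_sq_le_bregman hR hsc) hη hηdec hp0 (hobs01 · ω) hT
      (fun t ht => ?_) hω
    rw [hupd t ht ω, hE, pinballSlope]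
    ring
  have hloss_nonneg : ∀ t ω, 0 ≤ pinball α (r t ω) (rstar t) * obs t ω / p t := fun t ω =>
    div_nonneg (mul_nonneg (pinball_nonneg hα _ _) (by rcases hobs01 t ω with h | h <;> simp [h]))
      (hp0 t).le
  have hexp := integral_le_of_ae_le_add_sum_mul
    (ae_of_all _ fun ω => sum_nonneg fun t _ => hloss_nonneg t ω) hobsmeas hobs01
    (fun t => by rw [measureReal_def, hobsp, ENNReal.toReal_ofReal (hp0 t).le]) hpath
  have hcp : ∀ t ∈ Icc 1 T, c t * p t = pinball α u (rstar t) + 1 / (2 * μ) * (η t / p t) :=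
    fun t _ => by simp only [c]; field_simp [(hp0 t).ne']
  rw [sum_congr rfl hcp, sum_add_distrib, ← mul_sum] at hexp
  have hmin := sum_div_le_sum_div_inf' (nonempty_Icc.mpr hT) (fun t _ => (hη t).le)
    (fun t _ => hp0 t)
  calc _ ≤ D / η T + 1 / (2 * μ) * ∑ t ∈ Icc 1 T, η t / p t := by linarith
    _ ≤ D / η T + 1 / (2 * μ) * ((∑ t ∈ Icc 1 T, η t) / (Icc 1 T).inf' _ p) := by gcongr
    _ = _ := by ring

/-- Theorem 2: expected regret bound of IM-OCP with nonincreasing step sizes and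
independent Bernoulli feedback. If `u` minimizes the cumulative quantile loss and
`B_R(u, r_t) ≤ D` almost surely for all `1 ≤ t ≤ T`, then
`E[Σ_t ℓ(r_t, r*_t) obs_t/p_t] - min_v Σ_t ℓ(v, r*_t) ≤ D/η_T + (Σ_t η_t)/(2 μ p_min)`. -/
theorem imocp_expected_regret_bound
    {Ω : Type*} [MeasurableSpace Ω] (Pr : Measure Ω) [IsProbabilityMeasure Pr]
    (B α μ D : ℝ) (hB : 0 < B) (hα : α ∈ Set.Icc (0 : ℝ) 1) (hμ : 0 < μ)
    (rstar η p : ℕ → ℝ)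
    (hrstar : ∀ t, rstar t ∈ Set.Icc 0 B)
    (hη : ∀ t, 0 < η t)
    (hηdec : ∀ t, η (t + 1) ≤ η t)
    (hp : ∀ t, p t ∈ Set.Ioc (0 : ℝ) 1)
    (obs : ℕ → Ω → ℝ)
    (hobsmeas : ∀ t, Measurable (obs t))
    (hobs01 : ∀ t ω, obs t ω = 0 ∨ obs t ω = 1)
    (hindep : iIndepFun obs Pr)
    (hobsp : ∀ t, Pr {ω | obs t ω = 1} = ENNReal.ofReal (p t))
    (R R' : ℝ → ℝ)
    (hR : ∀ x, HasDerivAt R (R' x) x)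
    (hbij : Function.Bijective R')
    (hsc : ∀ x y, (R' x - R' y) * (x - y) ≥ μ * (x - y) ^ 2)
    (r E : ℕ → Ω → ℝ)
    (hrmeas : ∀ t, Measurable (r t))
    (hE : ∀ t ω, E t ω = if rstar t > r t ω then 1 else 0)
    (hr1 : ∀ ω, r 1 ω ∈ Set.Icc 0 B)
    (hupd : ∀ t, 1 ≤ t → ∀ ω,
      R' (r (t + 1) ω) = R' (r t ω) - η t * (α - E t ω) * obs t ω / p t)
    (T : ℕ) (hT : 1 ≤ T)
    (u : ℝ)
    (hu : ∀ v : ℝ, ∑ t ∈ Finset.Icc 1 T, pinball α u (rstar t) ≤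
      ∑ t ∈ Finset.Icc 1 T, pinball α v (rstar t))
    (hD : ∀ t ∈ Finset.Icc 1 T, ∀ᵐ ω ∂Pr,
      R u - R (r t ω) - R' (r t ω) * (u - r t ω) ≤ D) :
    (∫ ω, ∑ t ∈ Finset.Icc 1 T, pinball α (r t ω) (rstar t) * obs t ω / p t ∂Pr) -
        ∑ t ∈ Finset.Icc 1 T, pinball α u (rstar t) ≤
      D / η T +
        (1 / (2 * μ * ((Finset.Icc 1 T).inf' (Finset.nonempty_Icc.mpr hT) p))) *
          ∑ t ∈ Finset.Icc 1 T, η t :=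
  imocp_expected_regret_bound_general Pr α μ D hα hμ rstar η p hη hηdec hp obs hobsmeas hobs01 hobsp
    R R' hR hsc r E hE hupd T hT u hD
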